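/- arXiv:2508.07823 — 4 statements merged into one kernel-verified Lean document; each statement's English description precedes it below -/
import Mathlib

section
/- There exists a constant C > 0 such that the following holds for all integers n, B, n' with 1 < B ≤ n/(log n)^5 and B·(log n)^5 ≤ n' ≤ n. Set m' = ⌈(n'/B) − (1/2)(n'/B)^{2/3}⌉. Let Z_1, ..., Z_{n'} be i.i.d. uniform on {1,...,B} (n' balls thrown one after another into B bins), and for a bin b and time t let L_b(t) = |{r ≤ t : Z_r = b}|. Then with probability at least 1 − C/n^{11}: (i) every bin b satisfies L_b(n') ≥ m'; and (ii) letting t* be the first time at which some bin's load reaches m', every bin b satisfies L_b(t*) ≥ m' − (1/5)·d(n'/B). -/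
/-!
For a fixed bin `b` and time `s`, the load `L_b(s)` is a sum of `s` independent Bernoulli(1/B)
variables, so the moment generating function of `L_b(s) - s/B` at `|t| ≤ 1` is at most
`exp (s/B · t²)`. With `y = n'/B = u³` and `d(y) ≥ u²/4`, Chernoff's bound at `t = ±1/(80u)`
bounds each deviation probability `P(|L_b(s) - s/B| ≥ d(y)/10)` by `2 exp (-u/6400)`, and
`u ≥ 10⁵ log n` because `u³ ≥ (log n)⁵` (for `log n < 10⁸` the claim is vacuous with
`C = exp (11·10⁸)`). A union bound over the `B (n' + 1)` pairs `(b, s)` then shows that, outside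
an event of probability at most `4/n^11`, every load stays within `ε = d(y)/10` of its mean `s/B`
at all times `s ≤ n'`. On that event every final load is at least `y - ε ≥ m'`, and at the
hitting time `t*` some bin has load `≥ m'`, so `t*/B ≥ m' - ε` and every bin has load at least
`t*/B - ε ≥ m' - 2ε = m' - d(y)/5`.
-/

open MeasureTheory
open scoped ENNReal

/-- The distribution of `n'` balls thrown independently and uniformly into `B` bins. -/
noncomputable def uniformBins (n' B : ℕ) : Measure (Fin n' → Fin B) :=
  Measure.pi fun _ => ((B : ℝ≥0∞)⁻¹ • Measure.count)

/-- `load z b t`: the number of balls among the first `t` that land in bin `b`. -/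
def load {n' B : ℕ} (z : Fin n' → Fin B) (b : Fin B) (t : ℕ) : ℕ :=
  (Finset.univ.filter fun r : Fin n' => (r : ℕ) < t ∧ z r = b).card

/-- `dFn y = y - ⌈y - (1/2)·y^(2/3)⌉`, so that `⌈y - (1/2)·y^(2/3)⌉ = y - dFn y`. -/
noncomputable def dFn (y : ℝ) : ℝ := y - (⌈y - (1/2) * y ^ ((2:ℝ)/3)⌉ : ℤ)

/-- The bound `m' = ⌈(n'/B) - (1/2)·(n'/B)^(2/3)⌉`. -/
noncomputable def mBound (n' B : ℕ) : ℤ :=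
  ⌈((n' : ℝ)/B) - (1/2) * (((n' : ℝ)/B) ^ ((2:ℝ)/3))⌉

/-- The first time at which some bin's load reaches `m`. -/
noncomputable def hitTime {n' B : ℕ} (z : Fin n' → Fin B) (m : ℤ) : ℕ :=
  sInf {t : ℕ | ∃ b : Fin B, m ≤ (load z b t : ℤ)}

open ProbabilityTheory Real

section

variable {n' B : ℕ}

instance [NeZero B] : IsProbabilityMeasure ((B : ℝ≥0∞)⁻¹ • Measure.count : Measure (Fin B)) :=
  ⟨by simp [ENNReal.inv_mul_cancel (NeZero.ne (B : ℝ≥0∞))]⟩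

instance [NeZero B] : IsProbabilityMeasure (uniformBins n' B) := by
  unfold uniformBins
  infer_instance

lemma load_eq_sum (z : Fin n' → Fin B) (b : Fin B) (s : ℕ) :
    (load z b s : ℝ) = ∑ r : Fin n', if (r : ℕ) < s ∧ z r = b then 1 else 0 := by
  rw [load, Finset.card_filter]
  push_cast
  rfl

lemma integral_exp_mul_load [NeZero B] (b : Fin B) {s : ℕ} (hs : s ≤ n') (t : ℝ) :
    ∫ z, exp (t * load z b s) ∂(uniformBins n' B) = (1 + (exp t - 1) / B) ^ s := by
  have hfactor : ∀ z : Fin n' → Fin B, exp (t * load z b s) =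
      ∏ r : Fin n', exp (t * if (r : ℕ) < s ∧ z r = b then 1 else 0) := by
    intro z
    rw [load_eq_sum, Finset.mul_sum, exp_sum]
  have hcoord : ∀ r : Fin n', ∫ x, exp (t * if (r : ℕ) < s ∧ x = b then 1 else 0)
      ∂((B : ℝ≥0∞)⁻¹ • Measure.count) = if (r : ℕ) < s then 1 + (exp t - 1) / B else 1 := by
    intro r
    have hB : (B : ℝ) ≠ 0 := NeZero.ne _
    rw [integral_smul_measure, integral_count]
    split_ifs with hr
    · have hsplit : ∀ x : Fin B, exp (t * if x = b then 1 else 0) =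
          (if x = b then exp t - 1 else 0) + 1 := fun x => by split_ifs <;> simp
      simp only [hr, true_and, hsplit, Finset.sum_add_distrib, Finset.sum_ite_eq',
        Finset.mem_univ, if_true, Finset.sum_const, Finset.card_univ, Fintype.card_fin,
        nsmul_eq_mul, mul_one, ENNReal.toReal_inv, ENNReal.toReal_natCast, smul_eq_mul]
      field_simp
      ring
    · simp [hr, hB]
  simp_rw [hfactor, uniformBins]
  rw [integral_fintype_prod_eq_prod
    (fun (r : Fin n') (x : Fin B) => exp (t * if (r : ℕ) < s ∧ x = b then 1 else 0))]
  simp_rw [hcoord]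
  rw [Finset.prod_ite, Finset.prod_const_one, mul_one, Finset.prod_const, Fin.card_filter_val_lt,
    min_eq_right hs]

lemma mgf_load_sub_mean_le [NeZero B] (b : Fin B) {s : ℕ} (hs : s ≤ n') {t : ℝ} (ht : |t| ≤ 1) :
    mgf (fun z => (load z b s : ℝ) - s / B) (uniformBins n' B) t ≤ exp (s / B * t ^ 2) := by
  have hB : (1 : ℝ) ≤ B := by exact_mod_cast Nat.one_le_iff_ne_zero.mpr (NeZero.ne B)
  have hbase : 0 ≤ 1 + (exp t - 1) / B := by
    have : -1 ≤ (exp t - 1) / B := by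
      rw [le_div_iff₀ (by positivity)]
      nlinarith [exp_pos t]
    linarith
  have hmgf : mgf (fun z => (load z b s : ℝ)) (uniformBins n' B) t = (1 + (exp t - 1) / B) ^ s :=
    integral_exp_mul_load b hs t
  simp_rw [sub_eq_neg_add]
  rw [mgf_const_add, hmgf]
  calc exp (t * -(s / B)) * (1 + (exp t - 1) / B) ^ s
      ≤ exp (t * -(s / B)) * exp ((exp t - 1) / B) ^ s := by
        gcongr
        linarith [add_one_le_exp ((exp t - 1) / B)]
    _ = exp (s / B * (exp t - 1 - t)) := by
        rw [← exp_nat_mul, ← exp_add]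
        ring_nf
    _ ≤ exp (s / B * t ^ 2) := by
        gcongr
        exact (le_abs_self _).trans (abs_exp_sub_one_sub_id_le ht)

lemma measureReal_le_abs_load_sub_mean_le [NeZero B] (b : Fin B) {s : ℕ} (hs : s ≤ n') (ε : ℝ)
    {l : ℝ} (hl0 : 0 ≤ l) (hl1 : l ≤ 1) :
    (uniformBins n' B).real {z | ε ≤ |(load z b s : ℝ) - s / B|} ≤
      2 * exp (s / B * l ^ 2 - l * ε) := by
  set X : (Fin n' → Fin B) → ℝ := fun z => (load z b s : ℝ) - s / B
  have hsplit : {z | ε ≤ |X z|} = {z | ε ≤ X z} ∪ {z | X z ≤ -ε} := by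
    ext z
    simp only [Set.mem_ofPred_eq, Set.mem_union, le_abs', or_comm]
  have hupper : (uniformBins n' B).real {z | ε ≤ X z} ≤ exp (s / B * l ^ 2 - l * ε) :=
    calc _ ≤ exp (-l * ε) * mgf X (uniformBins n' B) l :=
          measure_ge_le_exp_mul_mgf ε hl0 Integrable.of_finite
      _ ≤ exp (-l * ε) * exp (s / B * l ^ 2) := by
          gcongr
          exact mgf_load_sub_mean_le b hs (by rw [abs_of_nonneg hl0]; exact hl1)
      _ = exp (s / B * l ^ 2 - l * ε) := by rw [← exp_add]; ring_nf
  have hlower : (uniformBins n' B).real {z | X z ≤ -ε} ≤ exp (s / B * l ^ 2 - l * ε) :=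
    calc _ ≤ exp (-(-l) * -ε) * mgf X (uniformBins n' B) (-l) :=
          measure_le_le_exp_mul_mgf (-ε) (neg_nonpos.mpr hl0) Integrable.of_finite
      _ ≤ exp (-(-l) * -ε) * exp (s / B * (-l) ^ 2) := by
          gcongr
          exact mgf_load_sub_mean_le b hs (by rw [abs_neg, abs_of_nonneg hl0]; exact hl1)
      _ = exp (s / B * l ^ 2 - l * ε) := by rw [← exp_add]; ring_nf
  rw [hsplit]
  linarith [measureReal_union_le (μ := uniformBins n' B) {z | ε ≤ X z} {z | X z ≤ -ε}]

def LoadsNearMean (z : Fin n' → Fin B) (ε : ℝ) : Prop :=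
  ∀ b s, s ≤ n' → |(load z b s : ℝ) - s / B| ≤ ε

lemma measureReal_not_loadsNearMean_le [NeZero B] (ε : ℝ) {l : ℝ} (hl0 : 0 ≤ l) (hl1 : l ≤ 1) :
    (uniformBins n' B).real {z | ¬ LoadsNearMean z ε} ≤
      2 * B * (n' + 1) * exp (n' / B * l ^ 2 - l * ε) := by
  have hcover : {z : Fin n' → Fin B | ¬ LoadsNearMean z ε} ⊆
      ⋃ b ∈ (Finset.univ : Finset (Fin B)), ⋃ s ∈ Finset.range (n' + 1),
        {z | ε ≤ |(load z b s : ℝ) - s / B|} := by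
    intro z hz
    simp only [LoadsNearMean, not_forall, not_le, Set.mem_ofPred_eq] at hz
    obtain ⟨b, s, hs, hfar⟩ := hz
    simp only [Set.mem_iUnion, Finset.mem_univ, Finset.mem_range, exists_true_left]
    exact ⟨b, s, Nat.lt_succ_of_le hs, hfar.le⟩
  have hterm : ∀ b : Fin B, ∀ s ∈ Finset.range (n' + 1),
      (uniformBins n' B).real {z | ε ≤ |(load z b s : ℝ) - s / B|} ≤
        2 * exp (n' / B * l ^ 2 - l * ε) := by
    intro b s hs
    have hs : s ≤ n' := Nat.lt_succ_iff.mp (Finset.mem_range.mp hs)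
    refine (measureReal_le_abs_load_sub_mean_le b hs ε hl0 hl1).trans ?_
    gcongr
  calc _ ≤ _ := measureReal_mono hcover (measure_ne_top _ _)
    _ ≤ ∑ b : Fin B, ∑ s ∈ Finset.range (n' + 1),
          (uniformBins n' B).real {z | ε ≤ |(load z b s : ℝ) - s / B|} :=
        (measureReal_biUnion_finset_le _ _).trans
          (Finset.sum_le_sum fun b _ => measureReal_biUnion_finset_le _ _)
    _ ≤ ∑ _b : Fin B, ∑ _s ∈ Finset.range (n' + 1), 2 * exp (n' / B * l ^ 2 - l * ε) :=
        Finset.sum_le_sum fun b _ => Finset.sum_le_sum (hterm b)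
    _ = 2 * B * (n' + 1) * exp (n' / B * l ^ 2 - l * ε) := by
        simp only [Finset.sum_const, Finset.card_univ, Fintype.card_fin, Finset.card_range,
          nsmul_eq_mul]
        push_cast
        ring

section

variable {z : Fin n' → Fin B} {ε : ℝ} {m : ℤ}

lemma LoadsNearMean.le_load (hz : LoadsNearMean z ε) (hm : (m : ℝ) ≤ n' / B - ε) (b : Fin B) :
    m ≤ (load z b n' : ℤ) := by
  have hnear := (abs_le.mp (hz b n' le_rfl)).1
  exact_mod_cast (show (m : ℝ) ≤ load z b n' by linarith)

lemma LoadsNearMean.sub_two_mul_le_load_hitTime (hz : LoadsNearMean z ε)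
    (hm : (m : ℝ) ≤ n' / B - ε) (b : Fin B) :
    (m : ℝ) - 2 * ε ≤ load z b (hitTime z m) := by
  have hmem : n' ∈ {t : ℕ | ∃ b : Fin B, m ≤ (load z b t : ℤ)} := ⟨b, hz.le_load hm b⟩
  have hhit : hitTime z m ≤ n' := Nat.sInf_le hmem
  obtain ⟨b₁, hb₁⟩ : ∃ b₁ : Fin B, m ≤ (load z b₁ (hitTime z m) : ℤ) := Nat.sInf_mem ⟨n', hmem⟩
  have hb₁' : (m : ℝ) ≤ load z b₁ (hitTime z m) := by exact_mod_cast hb₁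
  have hb₁_near := (abs_le.mp (hz b₁ _ hhit)).2
  have hb_near := (abs_le.mp (hz b _ hhit)).1
  linarith

end

end

lemma exists_pow_three_eq {y : ℝ} (hy : 0 ≤ y) : ∃ u, 0 ≤ u ∧ u ^ 3 = y :=
  ⟨y ^ ((3 : ℕ)⁻¹ : ℝ), by positivity, rpow_inv_natCast_pow hy three_ne_zero⟩

lemma le_dFn_pow_three {u : ℝ} (hu : 2 ≤ u) : u ^ 2 / 4 ≤ dFn (u ^ 3) := by
  have hpow : (u ^ 3) ^ ((2 : ℝ) / 3) = u ^ 2 := by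
    rw [← rpow_natCast, ← rpow_mul (by linarith)]
    norm_num
  have hceil := Int.ceil_lt_add_one (u ^ 3 - 1 / 2 * (u ^ 3) ^ ((2 : ℝ) / 3))
  rw [dFn]
  nlinarith

lemma dFn_nonneg {y : ℝ} (hy : 8 ≤ y) : 0 ≤ dFn y := by
  obtain ⟨u, hu0, rfl⟩ := exists_pow_three_eq (by linarith : 0 ≤ y)
  have hu : 2 ≤ u := le_of_pow_le_pow_left₀ three_ne_zero hu0 (by linarith)
  exact (by positivity : 0 ≤ u ^ 2 / 4).trans (le_dFn_pow_three hu)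

lemma mBound_eq (n' B : ℕ) : (mBound n' B : ℝ) = n' / B - dFn (n' / B) := by
  rw [mBound, dFn]
  ring

lemma exists_chernoff_parameter {K y : ℝ} (hK : 10 ^ 8 ≤ K) (hy : K ^ 5 ≤ y) :
    ∃ l, 0 ≤ l ∧ l ≤ 1 ∧ y * l ^ 2 - l * (dFn y / 10) ≤ -(13 * K) := by
  obtain ⟨u, hu0, rfl⟩ := exists_pow_three_eq ((by positivity : 0 ≤ K ^ 5).trans hy)
  have hu : 10 ^ 5 * K ≤ u := by
    refine le_of_pow_le_pow_left₀ three_ne_zero hu0 (le_trans ?_ hy)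
    have hK2 : (10 : ℝ) ^ 15 ≤ K ^ 2 := by nlinarith
    nlinarith [mul_le_mul_of_nonneg_right hK2 (by positivity : (0 : ℝ) ≤ K ^ 3)]
  have hd := le_dFn_pow_three (by nlinarith : 2 ≤ u)
  have hu_pos : 0 < u := by linarith
  refine ⟨1 / (80 * u), by positivity, by rw [div_le_one (by positivity)]; nlinarith, ?_⟩
  calc u ^ 3 * (1 / (80 * u)) ^ 2 - 1 / (80 * u) * (dFn (u ^ 3) / 10)
      ≤ u ^ 3 * (1 / (80 * u)) ^ 2 - 1 / (80 * u) * (u ^ 2 / 40) := by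
        gcongr u ^ 3 * (1 / (80 * u)) ^ 2 - 1 / (80 * u) * ?_
        linarith
    _ = -(u / 6400) := by field_simp; ring
    _ ≤ -(13 * K) := by nlinarith

lemma measureReal_not_loadsNearMean_dFn_le {n' B : ℕ} [NeZero B] {n : ℕ} (hK : 10 ^ 8 ≤ log n)
    (hn' : (B : ℝ) * log n ^ 5 ≤ n') (hn'n : n' ≤ n) :
    (uniformBins n' B).real {z | ¬ LoadsNearMean z (dFn (n' / B) / 10)} ≤ 4 / n ^ 11 := by
  have hB : (1 : ℝ) ≤ B := by exact_mod_cast Nat.one_le_iff_ne_zero.mpr (NeZero.ne B)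
  have hK5 : 1 ≤ log n ^ 5 := one_le_pow₀ (by linarith)
  obtain ⟨l, hl0, hl1, hexp⟩ := exists_chernoff_parameter hK (y := n' / B)
    (by rw [le_div_iff₀ (by positivity)]; linarith)
  have hn : (0 : ℝ) < n := Nat.cast_pos.mpr (Nat.pos_of_ne_zero (by rintro rfl; norm_num at hK))
  have hn'n : (n' : ℝ) ≤ n := by exact_mod_cast hn'n
  have hBn : (B : ℝ) ≤ n := by nlinarith
  have hn'2 : (n' : ℝ) + 1 ≤ 2 * n := by linarith
  have hpow : exp (-(13 * log n)) = ((n : ℝ) ^ 13)⁻¹ := by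
    rw [exp_neg, mul_comm, exp_mul, exp_log hn]
    norm_cast
  calc _ ≤ 2 * B * (n' + 1) * exp (n' / B * l ^ 2 - l * (dFn (n' / B) / 10)) :=
        measureReal_not_loadsNearMean_le _ hl0 hl1
    _ ≤ 2 * n * (2 * n) * exp (-(13 * log n)) := by gcongr
    _ = 4 / n ^ 11 := by
        rw [hpow]
        field_simp
        ring

lemma ofReal_one_sub_le_measure {α : Type*} [MeasurableSpace α] {μ : Measure α}
    [IsProbabilityMeasure μ] {s t : Set α} {p : ℝ} (hts : t ⊆ s) (ht : μ.real tᶜ ≤ p) :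
    ENNReal.ofReal (1 - p) ≤ μ s := by
  have hcover : 1 ≤ μ.real s + μ.real sᶜ := by
    simpa [Set.union_compl_self] using measureReal_union_le (μ := μ) s sᶜ
  have hcompl : μ.real sᶜ ≤ μ.real tᶜ := measureReal_mono (Set.compl_subset_compl.mpr hts)
  rw [← ofReal_measureReal]
  exact ENNReal.ofReal_le_ofReal (by linarith)

/-- Balls-and-bins concentration: with probability `1 - O(1/n^11)`, (i) every bin ends
with load at least `m'`, and (ii) at the first moment some bin's load reaches `m'`,
every bin has load at least `m' - (1/5)·d(n'/B)`. -/
theorem balls_in_bins_phase_concentration :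
    ∃ C : ℝ, 0 < C ∧ ∀ n B n' : ℕ, 1 < B → (B : ℝ) ≤ (n : ℝ) / (Real.log n) ^ 5 →
      (B : ℝ) * (Real.log n) ^ 5 ≤ (n' : ℝ) → n' ≤ n →
      ENNReal.ofReal (1 - C / (n : ℝ) ^ 11) ≤
        uniformBins n' B
          {z | (∀ b : Fin B, mBound n' B ≤ (load z b n' : ℤ)) ∧
               (∀ b : Fin B,
                 ((mBound n' B : ℝ)) - (1/5) * dFn ((n' : ℝ)/B) ≤
                   (load z b (hitTime z (mBound n' B)) : ℝ))} := by
  refine ⟨exp (11 * 10 ^ 8), exp_pos _, fun n B n' hB hBn hn' hn'n => ?_⟩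
  have : NeZero B := ⟨by omega⟩
  have hn : 0 < n := Nat.pos_of_ne_zero (by rintro rfl; simp at hBn; omega)
  rcases lt_or_ge (log n) (10 ^ 8) with hsmall | hlarge
  · have hnC : (n : ℝ) ^ 11 ≤ exp (11 * 10 ^ 8) := by
      rw [← exp_log (by positivity : (0 : ℝ) < n), ← exp_nat_mul]
      gcongr
      push_cast
      linarith
    rw [ENNReal.ofReal_eq_zero.mpr]
    · exact zero_le
    · rw [sub_nonpos, le_div_iff₀ (by positivity)]
      linarith
  · have hm : (mBound n' B : ℝ) ≤ n' / B - dFn (n' / B) / 10 := by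
      have hy : 8 ≤ (n' : ℝ) / B := by
        rw [le_div_iff₀ (by positivity)]
        have hK5 : (8 : ℝ) ≤ log n ^ 5 :=
          le_trans (by norm_num) (pow_le_pow_left₀ (by norm_num) hlarge 5)
        nlinarith
      linarith [mBound_eq n' B, dFn_nonneg hy]
    refine ofReal_one_sub_le_measure (t := {z | LoadsNearMean z (dFn (n' / B) / 10)})
      (fun z hz => ⟨hz.le_load hm, fun b => ?_⟩) ?_
    · linarith [hz.sub_two_mul_le_load_hitTime hm b]
    · rw [Set.compl_ofPred]
      refine (measureReal_not_loadsNearMean_dFn_le hlarge hn' hn'n).trans ?_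
      gcongr
      linarith [add_one_le_exp (11 * 10 ^ 8 : ℝ)]
end

section
/- There exists an integer n_0 such that the following deterministic statement holds for all integers n ≥ n_0 and all integers B, n' with 1 < B ≤ n/(log n)^5 and B·(log n)^5 ≤ n' ≤ n. Set m' = ⌈(n'/B) − (1/2)(n'/B)^{2/3}⌉. Let z : {1,...,n'} → {1,...,B} be any sequence of bin choices, and for a bin b and time t let L_b(t) = |{r ≤ t : z_r = b}|. Suppose that for every integer i with B·(log n)^4 ≤ i ≤ n' and every bin b one has |L_b(i) − i/B| ≤ (1/20)·d(i/B). Then: (i) every bin b satisfies L_b(n') ≥ m'; and (ii) letting t* be the first time at which some bin's load reaches m', every bin b satisfies L_b(t*) ≥ m' − (1/5)·d(n'/B). -/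
open MeasureTheory
open scoped ENNReal

lemma dFn_le_half (x : ℝ) : dFn x ≤ (1/2) * x ^ ((2:ℝ)/3) := by
  have := Int.le_ceil (x - (1/2) * x ^ ((2:ℝ)/3))
  unfold dFn; linarith

lemma half_lt_dFn (x : ℝ) : (1/2) * x ^ ((2:ℝ)/3) - 1 < dFn x := by
  have := Int.ceil_lt_add_one (x - (1/2) * x ^ ((2:ℝ)/3))
  unfold dFn; linarith

lemma load_mono' {n' B : ℕ} (z : Fin n' → Fin B) (b : Fin B) {s t : ℕ} (h : s ≤ t) :
    load z b s ≤ load z b t := by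
  apply Finset.card_le_card
  intro r hr
  simp only [Finset.mem_filter] at *
  exact ⟨hr.1, lt_of_lt_of_le hr.2.1 h, hr.2.2⟩

lemma rpow8 : (8:ℝ) ^ ((2:ℝ)/3) = 4 := by
  rw [show (8:ℝ) = 2 ^ ((3:ℕ):ℝ) by rw [Real.rpow_natCast]; norm_num,
    ← Real.rpow_mul (by norm_num)]
  rw [show ((3:ℕ):ℝ) * (2/3) = ((2:ℕ):ℝ) by push_cast; ring, Real.rpow_natCast]
  norm_num

lemma rpow23_le_self {x : ℝ} (hx : 1 ≤ x) : x ^ ((2:ℝ)/3) ≤ x := by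
  calc x ^ ((2:ℝ)/3) ≤ x ^ (1:ℝ) :=
        Real.rpow_le_rpow_of_exponent_le hx (by norm_num)
    _ = x := Real.rpow_one x

/-- Deterministic core of the phase concentration claim: if every prefix load is
concentrated around its mean, then (i) every bin ends with load at least `m'`, and
(ii) at the first time some bin's load reaches `m'`, every bin has load at least
`m' - (1/5)·d(n'/B)`. -/
theorem balls_in_bins_phase_concentration_deterministic :
    ∃ n₀ : ℕ, ∀ n : ℕ, n₀ ≤ n → ∀ B n' : ℕ, 1 < B →
      (B : ℝ) ≤ (n : ℝ) / (Real.log n) ^ 5 →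
      (B : ℝ) * (Real.log n) ^ 5 ≤ (n' : ℝ) → n' ≤ n →
      ∀ z : Fin n' → Fin B,
        (∀ i : ℕ, ∀ b : Fin B, (B : ℝ) * (Real.log n) ^ 4 ≤ (i : ℝ) → i ≤ n' →
          |(load z b i : ℝ) - (i : ℝ)/B| ≤ (1/20) * dFn ((i : ℝ)/B)) →
        (∀ b : Fin B, mBound n' B ≤ (load z b n' : ℤ)) ∧
        (∀ b : Fin B,
          ((mBound n' B : ℝ)) - (1/5) * dFn ((n' : ℝ)/B) ≤
            (load z b (hitTime z (mBound n' B)) : ℝ)) := by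
  refine ⟨3^30, ?_⟩
  intro n hn B n' hB hBle hn'lo hn'hi z hconc
  have hBpos : (0:ℝ) < B := by positivity
  have hB1 : (1:ℝ) ≤ B := by exact_mod_cast hB.le
  set L := Real.log n with hLdef
  -- L ≥ 30
  have hL : (30:ℝ) ≤ L := by
    have h3 : (1:ℝ) ≤ Real.log 3 := by
      rw [Real.le_log_iff_exp_le (by norm_num)]
      calc Real.exp 1 ≤ 2.7182818286 := Real.exp_one_lt_d9.le
        _ ≤ 3 := by norm_num
    have h1 : (30:ℝ) ≤ Real.log ((3:ℕ)^30 : ℕ) := by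
      have h : (((3:ℕ)^30 : ℕ) : ℝ) = ((3:ℝ)^(30:ℕ) : ℝ) := by push_cast; ring
      rw [h, Real.log_pow]; push_cast; linarith
    refine h1.trans ?_
    apply Real.log_le_log (by positivity)
    exact_mod_cast hn
  have hL1 : (1:ℝ) ≤ L := by linarith
  have hL4 : (1:ℝ) ≤ L^4 := one_le_pow₀ hL1
  have hL4nn : (0:ℝ) ≤ L^4 := by linarith
  have hL5 : 30 * L^4 ≤ L^5 := by
    have h := mul_le_mul_of_nonneg_right hL hL4nn
    calc 30 * L^4 ≤ L * L^4 := h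
      _ = L^5 := by ring
  have hL45 : L^4 ≤ L^5 := by linarith
  set y := (n':ℝ)/B with hy
  have hyL : L^5 ≤ y := by
    rw [hy, le_div_iff₀ hBpos]; linarith [hn'lo]
  have hy8 : (8:ℝ) ≤ y := by linarith
  have hy1 : (1:ℝ) ≤ y := by linarith
  have hy23 : (4:ℝ) ≤ y ^ ((2:ℝ)/3) := by
    rw [← rpow8]
    exact Real.rpow_le_rpow (by norm_num) hy8 (by norm_num)
  have hdy1 : (1:ℝ) ≤ dFn y := by
    have := half_lt_dFn y; linarith
  have hm : (mBound n' B : ℝ) = y - dFn y := by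
    unfold mBound dFn; ring
  -- part (i)
  have hBL4n' : (B:ℝ) * L^4 ≤ (n':ℝ) := by
    have h := mul_le_mul_of_nonneg_left hL45 (le_of_lt hBpos)
    linarith
  have part1 : ∀ b : Fin B, mBound n' B ≤ (load z b n' : ℤ) := by
    intro b
    have h1 := hconc n' b hBL4n' le_rfl
    rw [abs_le] at h1
    have : (mBound n' B : ℝ) ≤ (load z b n' : ℝ) := by
      rw [hm]; rw [← hy] at h1; linarith [h1.1]
    exact_mod_cast this
  refine ⟨part1, ?_⟩
  -- part (ii)
  set m := mBound n' B with hmdef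
  set S := {t : ℕ | ∃ b : Fin B, m ≤ (load z b t : ℤ)} with hS
  have hb1 : Fin B := ⟨0, by omega⟩
  have hn'S : n' ∈ S := ⟨hb1, part1 hb1⟩
  have hSne : S.Nonempty := ⟨n', hn'S⟩
  set t := hitTime z m with htdef
  have htmem : t ∈ S := Nat.sInf_mem hSne
  have htle : t ≤ n' := Nat.sInf_le hn'S
  -- the ceiling time i₁
  set i₁ := ⌈(B:ℝ) * L^4⌉₊ with hi₁def
  have hi₁ge : (B:ℝ) * L^4 ≤ (i₁:ℝ) := Nat.le_ceil _
  have hi₁lt : (i₁:ℝ) ≤ (B:ℝ) * L^4 + 1 := (Nat.ceil_lt_add_one (by positivity)).le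
  have hkey : (B:ℝ) * L^4 + 1 ≤ (B:ℝ) * L^5 := by
    nlinarith [mul_nonneg (by linarith : (0:ℝ) ≤ (B:ℝ) - 1)
      (by linarith : (0:ℝ) ≤ L^5 - L^4)]
  have hi₁n' : i₁ ≤ n' := by
    have : (i₁:ℝ) ≤ (n':ℝ) := by linarith
    exact_mod_cast this
  -- load at i₁ < m
  have hload_i₁ : ∀ b : Fin B, (load z b i₁ : ℝ) < (m:ℝ) := by
    intro b
    have h1 := hconc i₁ b hi₁ge hi₁n'
    rw [abs_le] at h1
    set u := (i₁:ℝ)/B with hu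
    have hu1 : L^4 ≤ u := by rw [hu, le_div_iff₀ hBpos]; linarith
    have hu1' : (1:ℝ) ≤ u := by linarith
    have hu2 : u ≤ L^4 + 1 := by
      rw [hu, div_le_iff₀ hBpos]; nlinarith
    have h2 : dFn u ≤ (1/2) * u := by
      have ha := dFn_le_half u
      have hb := rpow23_le_self hu1'
      linarith
    have hmlb : L^5 / 2 ≤ (m:ℝ) := by
      rw [hm]
      have ha := dFn_le_half y
      have hb := rpow23_le_self hy1
      linarith
    have hload : (load z b i₁ : ℝ) ≤ u + (1/20) * dFn u := by linarith [h1.2]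
    linarith
  have hti₁ : i₁ < t := by
    by_contra h
    push_neg at h
    obtain ⟨b, hb⟩ := htmem
    have h2 : (load z b t : ℝ) ≤ (load z b i₁ : ℝ) := by
      exact_mod_cast load_mono' z b h
    have h3 : (m:ℝ) ≤ (load z b t : ℝ) := by exact_mod_cast hb
    have := hload_i₁ b
    linarith
  have htB : (B:ℝ) * L^4 ≤ (t:ℝ) := by
    have : (i₁:ℝ) ≤ (t:ℝ) := by exact_mod_cast hti₁.le
    linarith
  -- concentration at t
  set x := (t:ℝ)/B with hx
  have hxy : x ≤ y := by
    rw [hx, hy]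
    gcongr
  have hx0 : (0:ℝ) ≤ x := by positivity
  have hdx : dFn x ≤ 2 * dFn y := by
    have h1 := dFn_le_half x
    have h2 : x ^ ((2:ℝ)/3) ≤ y ^ ((2:ℝ)/3) :=
      Real.rpow_le_rpow hx0 hxy (by norm_num)
    have h3 := half_lt_dFn y
    linarith
  obtain ⟨b₀, hb₀⟩ := htmem
  have hb₀r : (m:ℝ) ≤ (load z b₀ t : ℝ) := by exact_mod_cast hb₀
  have h0 := hconc t b₀ htB htle
  rw [abs_le, ← hx] at h0
  have hxlb : (m:ℝ) - (1/20) * dFn x ≤ x := by linarith [h0.2]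
  intro b
  have hb := hconc t b htB htle
  rw [abs_le, ← hx] at hb
  linarith [hb.1, hxlb, hdx]
end

section
/- There exists a constant c > 0 such that for every integer n ≥ 2, every deterministic online sorting strategy s for array size n, every integer 1 ≤ i ≤ n, and every index j ∈ {1,...,n−1}, the following holds: if the event {T_j(s,x) > n−i or T_{j+1}(s,x) > n−i} has positive probability (over an input x of n i.i.d. uniform samples from [0,1]), then Pr[ |A(j+1) − A(j)| ≥ 1/(4i) | T_j(s,x) > n−i or T_{j+1}(s,x) > n−i ] ≥ c, where A = A(s,x) is the final array and T_j(s,x) is the time at which cell j is filled. -/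
/-!
Let `K` be the time at which the later of the cells `j`, `j + 1` is filled, and `δ = 1/(4i)`.
Fix `k ≥ n - i` and all items except the `k`-th one, `t`. Whether `K ≥ k` is decided by the
items arriving before time `k`, and if `K = k` then one of the two cells receives `t` while the
other holds a value `a` that does not depend on `t`; so the gap is `|t - a|`, which is `< δ` on a
set of `t` of measure at most `2δ`. By Fubini, `Pr[K = k, gap < δ] ≤ 2δ · Pr[K ≥ k]`, and
summing over the at most `i` values of `k ≥ n - i` gives
`Pr[K ≥ n - i, gap < δ] ≤ Pr[K ≥ n - i] / 2`, so `c = 1/2` works.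
-/

open MeasureTheory
open scoped ENNReal

/-- The distribution of `n` i.i.d. uniform samples from `[0,1]`. -/
noncomputable def uniformCube (n : ℕ) : Measure (Fin n → ℝ) :=
  Measure.pi fun _ => (volume : Measure ℝ).restrict (Set.Icc 0 1)

/-- A deterministic online sorting strategy for array size `n`: upon arrival of the
`(k+1)`-st item, it is placed into cell `place x k`, which depends only on the first
`k+1` items and is distinct from all previously used cells. -/
structure OnlineStrategy (n : ℕ) where
  place : (Fin n → ℝ) → Fin n → Fin n
  online : ∀ x y : Fin n → ℝ, ∀ k : Fin n,
    (∀ i : Fin n, i ≤ k → x i = y i) → place x k = place y k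
  inj : ∀ x : Fin n → ℝ, Function.Injective (place x)
  meas : ∀ k : Fin n, Measurable fun x => place x k

/-- The final array produced by the strategy (cells indexed `0,…,n-1`):
cell `j` holds the item inserted at the unique time `k` with `place x k = j`. -/
noncomputable def strategyArr {n : ℕ} (S : OnlineStrategy n) (x : Fin n → ℝ) (j : ℕ) : ℝ :=
  if h : j < n then
    haveI : Nonempty (Fin n) := ⟨⟨j, h⟩⟩
    x (Function.invFun (S.place x) ⟨j, h⟩)
  else 0

/-- The cost: the sum of absolute differences between adjacent cells. -/
noncomputable def strategyCost {n : ℕ} (S : OnlineStrategy n) (x : Fin n → ℝ) : ℝ :=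
  ∑ j ∈ Finset.range (n - 1), |strategyArr S x (j + 1) - strategyArr S x j|

/-- The time (0-indexed, in `{0,…,n-1}`) at which cell `j` is filled, i.e. the unique
`k` with `place x k = j`. (Cell `j` out of range gets the junk value `0`.) -/
noncomputable def fillTime {n : ℕ} (S : OnlineStrategy n) (x : Fin n → ℝ) (j : ℕ) : ℕ :=
  if h : j < n then
    haveI : Nonempty (Fin n) := ⟨⟨j, h⟩⟩
    Fin.val (Function.invFun (S.place x) ⟨j, h⟩)
  else 0

/-- The uniform distribution on `Fin m`. -/
noncomputable def uniformFin (m : ℕ) : MeasureTheory.Measure (Fin m) :=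
  (m : ℝ≥0∞)⁻¹ • MeasureTheory.Measure.count

open Function

namespace MeasureTheory

theorem Measure.pi_le_mul_of_forall_section_le {ι : Type*} [Fintype ι] [DecidableEq ι]
    {X : ι → Type*} [∀ i, MeasurableSpace (X i)] (μ : ∀ i, Measure (X i))
    [∀ i, SigmaFinite (μ i)] (k : ι) [IsProbabilityMeasure (μ k)] {B C : Set (∀ i, X i)}
    (hB : MeasurableSet B) (hC : MeasurableSet C) {ε : ℝ≥0∞}
    (hBC : ∀ x ∈ B, ∀ t, update x k t ∈ C)
    (hsec : ∀ x, μ k {t | update x k t ∈ B} ≤ ε) :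
    Measure.pi μ B ≤ ε * Measure.pi μ C := by
  rw [← lintegral_indicator_one hB, ← lintegral_indicator_one hC,
    ← lintegral_const_mul ε (measurable_one.indicator hC)]
  refine lintegral_le_of_lmarginal_le {k} (measurable_one.indicator hB)
    ((measurable_one.indicator hC).const_mul ε) fun x => ?_
  simp only [lmarginal_singleton]
  by_cases hx : ∃ t, update x k t ∈ B
  · obtain ⟨t₀, ht₀⟩ := hx
    have hxC : ∀ t, update x k t ∈ C := by
      simpa only [update_idem] using hBC _ ht₀
    calc ∫⁻ t, B.indicator 1 (update x k t) ∂μ k = μ k {t | update x k t ∈ B} :=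
          lintegral_indicator_one (s := update x k ⁻¹' B) (measurable_update x hB)
      _ ≤ ε := hsec x
      _ = ∫⁻ t, ε * C.indicator 1 (update x k t) ∂μ k := by
          simp [Set.indicator_of_mem (hxC _)]
  · push Not at hx
    simp [Set.indicator_of_notMem (hx _)]

end MeasureTheory

namespace ProbabilityTheory

theorem one_sub_le_cond_of_measure_inter_compl_le {Ω : Type*} [MeasurableSpace Ω]
    {μ : Measure Ω} [IsFiniteMeasure μ] {E G : Set Ω} (hE : μ E ≠ 0) (hG : MeasurableSet G)
    {p : ℝ≥0∞} (h : μ (E ∩ Gᶜ) ≤ p * μ E) : 1 - p ≤ cond μ E G := by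
  have := cond_isProbabilityMeasure (μ := μ) hE
  have hcompl : cond μ E Gᶜ ≤ p := by
    calc cond μ E Gᶜ = (μ E)⁻¹ * μ (E ∩ Gᶜ) := cond_apply' hG.compl μ
      _ ≤ (μ E)⁻¹ * (p * μ E) := by gcongr
      _ = p := by rw [mul_left_comm, ENNReal.inv_mul_cancel hE (measure_ne_top μ E), mul_one]
  calc 1 - p ≤ 1 - cond μ E Gᶜ := tsub_le_tsub_left hcompl 1
    _ = cond μ E G := by
        rw [prob_compl_eq_one_sub hG, ENNReal.sub_sub_cancel ENNReal.one_ne_top prob_le_one]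

end ProbabilityTheory

instance : IsProbabilityMeasure ((volume : Measure ℝ).restrict (Set.Icc 0 1)) :=
  ⟨by simp⟩

instance (n : ℕ) : IsProbabilityMeasure (uniformCube n) := by
  unfold uniformCube
  infer_instance

namespace OnlineStrategy

variable {n : ℕ} (S : OnlineStrategy n) {x x' : Fin n → ℝ} {c d j : ℕ}

theorem fillTime_lt (x : Fin n → ℝ) (hc : c < n) : fillTime S x c < n := by
  simp only [fillTime, dif_pos hc, Fin.is_lt]

theorem place_fillTime (x : Fin n → ℝ) (hc : c < n) :
    S.place x ⟨fillTime S x c, fillTime_lt S x hc⟩ = ⟨c, hc⟩ := by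
  have : Nonempty (Fin n) := ⟨⟨c, hc⟩⟩
  simp only [fillTime, dif_pos hc, Fin.eta]
  exact invFun_eq ((Finite.injective_iff_surjective.mp (S.inj x)) ⟨c, hc⟩)

theorem fillTime_eq_iff (x : Fin n → ℝ) (hc : c < n) (s : Fin n) :
    fillTime S x c = s ↔ S.place x s = ⟨c, hc⟩ := by
  constructor
  · intro h
    simpa only [h] using place_fillTime S x hc
  · intro hs
    exact congrArg Fin.val (S.inj x (place_fillTime S x hc |>.trans hs.symm))

theorem eq_of_fillTime_eq (x : Fin n → ℝ) (hc : c < n) (hd : d < n)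
    (h : fillTime S x c = fillTime S x d) : c = d := by
  have := place_fillTime S x hc
  simp only [h, place_fillTime S x hd, Fin.mk.injEq] at this
  exact this.symm

theorem strategyArr_eq_of_fillTime_eq (hc : c < n) {s : Fin n} (h : fillTime S x c = s) :
    strategyArr S x c = x s := by
  simp only [fillTime, dif_pos hc] at h
  simp only [strategyArr, dif_pos hc, Fin.ext h]

theorem measurable_fillTime (hc : c < n) : Measurable fun x => fillTime S x c := by
  refine measurable_to_countable' fun v => ?_
  by_cases hv : v < n
  · have : (fun x => fillTime S x c) ⁻¹' {v} =
        (fun x => S.place x ⟨v, hv⟩) ⁻¹' {⟨c, hc⟩} := by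
      ext x
      exact fillTime_eq_iff S x hc ⟨v, hv⟩
    rw [this]
    exact S.meas _ (measurableSet_singleton _)
  · convert MeasurableSet.empty
    ext x
    simp only [Set.mem_preimage, Set.mem_singleton_iff, Set.mem_empty_iff_false, iff_false]
    rintro rfl
    exact hv (fillTime_lt S x hc)

theorem measurable_strategyArr (hc : c < n) : Measurable fun x => strategyArr S x c := by
  let g : ℕ × (Fin n → ℝ) → ℝ := fun p => if h : p.1 < n then p.2 ⟨p.1, h⟩ else 0
  have hg : Measurable g := measurable_from_prod_countable_right fun m => by
    by_cases h : m < n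
    · simpa only [g, dif_pos h] using measurable_pi_apply _
    · simp only [g, dif_neg h, measurable_const]
  have : (fun x => strategyArr S x c) = fun x => g (fillTime S x c, x) := by
    funext x
    simp [g, strategyArr_eq_of_fillTime_eq S hc (s := ⟨_, fillTime_lt S x hc⟩) rfl,
      fillTime_lt S x hc]
  exact this ▸ hg.comp ((measurable_fillTime S hc).prodMk measurable_id)

theorem fillTime_eq_of_forall_lt_eq {k : ℕ} (hxx' : ∀ s : Fin n, s < k → x s = x' s)
    (hc : c < n) (h : fillTime S x c < k) : fillTime S x' c = fillTime S x c := by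
  rw [fillTime_eq_iff S x' hc ⟨_, fillTime_lt S x hc⟩]
  refine (S.online x' x _ fun s hs => (hxx' s ?_).symm).trans (place_fillTime S x hc)
  exact lt_of_le_of_lt hs h

noncomputable def pairTime (S : OnlineStrategy n) (x : Fin n → ℝ) (j : ℕ) : ℕ :=
  max (fillTime S x j) (fillTime S x (j + 1))

noncomputable def adjGap (S : OnlineStrategy n) (x : Fin n → ℝ) (j : ℕ) : ℝ :=
  |strategyArr S x (j + 1) - strategyArr S x j|

theorem pairTime_lt (x : Fin n → ℝ) (hj : j + 1 < n) : pairTime S x j < n :=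
  max_lt (fillTime_lt S x (by omega)) (fillTime_lt S x hj)

theorem measurable_pairTime (hj : j + 1 < n) : Measurable fun x => pairTime S x j :=
  (measurable_fillTime S (by omega)).max (measurable_fillTime S hj)

theorem measurable_adjGap (hj : j + 1 < n) : Measurable fun x => adjGap S x j :=
  ((measurable_strategyArr S hj).sub (measurable_strategyArr S (by omega))).abs

theorem le_pairTime_of_forall_lt_eq {k : ℕ} (hxx' : ∀ s : Fin n, s < k → x s = x' s)
    (hj : j + 1 < n) (h : k ≤ pairTime S x j) : k ≤ pairTime S x' j := by
  by_contra! h'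
  have hx'x : ∀ s : Fin n, s < k → x' s = x s := fun s hs => (hxx' s hs).symm
  have h₀ := fillTime_eq_of_forall_lt_eq S hx'x (by omega) (lt_of_le_of_lt (le_max_left _ _) h')
  have h₁ := fillTime_eq_of_forall_lt_eq S hx'x hj (lt_of_le_of_lt (le_max_right _ _) h')
  simp only [pairTime, h₀, h₁] at h h'
  omega

theorem strategyArr_update_of_fillTime_lt {k : Fin n} (hc : c < n) (hd : d < n)
    (hdk : fillTime S x d < k) (t : ℝ)
    (hmax : max (fillTime S (update x k t) c) (fillTime S (update x k t) d) = k) :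
    strategyArr S (update x k t) c = t ∧ strategyArr S (update x k t) d = strategyArr S x d := by
  have hd' := fillTime_eq_of_forall_lt_eq S
    (fun s hs => (update_of_ne (Fin.ne_of_val_ne hs.ne) t x).symm) hd hdk
  have hc' : fillTime S (update x k t) c = k := by omega
  constructor
  · exact (strategyArr_eq_of_fillTime_eq S hc hc').trans (update_self k t x)
  · rw [strategyArr_eq_of_fillTime_eq S hd (s := ⟨_, fillTime_lt S x hd⟩) hd',
      strategyArr_eq_of_fillTime_eq S hd (s := ⟨_, fillTime_lt S x hd⟩) rfl,
      update_of_ne (Fin.ne_of_val_ne hdk.ne)]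

theorem exists_adjGap_update_eq_abs_sub (hj : j + 1 < n) {k : Fin n}
    (hx : pairTime S x j = k) :
    ∃ a, ∀ t, pairTime S (update x k t) j = k → adjGap S (update x k t) j = |t - a| := by
  have hne : fillTime S x j ≠ fillTime S x (j + 1) := fun h => by
    have := eq_of_fillTime_eq S x (by omega) hj h
    omega
  rcases lt_or_ge (fillTime S x j) k with hlt | hge
  · refine ⟨strategyArr S x j, fun t ht => ?_⟩
    obtain ⟨h₁, h₀⟩ := strategyArr_update_of_fillTime_lt S hj (by omega) hlt t
      ((max_comm _ _).trans ht)
    rw [adjGap, h₁, h₀]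
  · have hlt : fillTime S x (j + 1) < k := by
      simp only [pairTime] at hx
      omega
    refine ⟨strategyArr S x (j + 1), fun t ht => ?_⟩
    obtain ⟨h₀, h₁⟩ := strategyArr_update_of_fillTime_lt S (by omega) hj hlt t ht
    rw [adjGap, h₀, h₁, abs_sub_comm]

theorem volume_section_pairTime_eq_adjGap_lt_le (hj : j + 1 < n) (k : Fin n) (δ : ℝ)
    (x : Fin n → ℝ) :
    (volume : Measure ℝ).restrict (Set.Icc 0 1)
        {t | update x k t ∈ {y | pairTime S y j = k ∧ adjGap S y j < δ}} ≤
      ENNReal.ofReal (2 * δ) := by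
  by_cases hx : ∃ t₀, pairTime S (update x k t₀) j = k
  · obtain ⟨t₀, ht₀⟩ := hx
    obtain ⟨a, ha⟩ := exists_adjGap_update_eq_abs_sub S hj ht₀
    simp only [update_idem] at ha
    calc _ ≤ (volume : Measure ℝ).restrict (Set.Icc 0 1) (Metric.ball a δ) :=
          measure_mono fun t ht => by
            rw [Metric.mem_ball, Real.dist_eq, ← ha t ht.1]
            exact ht.2
      _ ≤ volume (Metric.ball a δ) := Measure.restrict_apply_le _ _
      _ = ENNReal.ofReal (2 * δ) := Real.volume_ball a δ
  · push Not at hx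
    simp [hx]

theorem uniformCube_pairTime_eq_adjGap_lt_le (hj : j + 1 < n) (k : Fin n) (δ : ℝ) :
    uniformCube n {x | pairTime S x j = k ∧ adjGap S x j < δ} ≤
      ENNReal.ofReal (2 * δ) * uniformCube n {x | k ≤ pairTime S x j} :=
  Measure.pi_le_mul_of_forall_section_le _ k
    ((measurable_pairTime S hj (measurableSet_singleton _)).inter
      (measurableSet_lt (measurable_adjGap S hj) measurable_const))
    (measurable_pairTime S hj measurableSet_Ici)
    (fun x hx t => le_pairTime_of_forall_lt_eq S
      (fun _ hs => (update_of_ne (Fin.ne_of_val_ne hs.ne) t x).symm) hj hx.1.ge)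
    (volume_section_pairTime_eq_adjGap_lt_le S hj k δ)

theorem uniformCube_late_adjGap_lt_le (hj : j + 1 < n) {i : ℕ} (hi : 1 ≤ i) :
    uniformCube n ({x | n - i ≤ pairTime S x j} ∩ {x | adjGap S x j < 1 / (4 * i)}) ≤
      2⁻¹ * uniformCube n {x | n - i ≤ pairTime S x j} := by
  set E := {x | n - i ≤ pairTime S x j}
  set δ : ℝ := 1 / (4 * i)
  let k₀ : Fin n := ⟨n - i, by omega⟩
  have hcover : E ∩ {x | adjGap S x j < δ} ⊆
      ⋃ k ∈ Finset.Ici k₀, {x | pairTime S x j = k ∧ adjGap S x j < δ} := fun x hx =>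
    Set.mem_biUnion (x := ⟨_, pairTime_lt S x hj⟩) (Finset.mem_Ici.mpr hx.1) ⟨rfl, hx.2⟩
  have hδ : (i : ℝ≥0∞) * ENNReal.ofReal (2 * δ) = 2⁻¹ := by
    have : (i : ℝ) * (2 * δ) = 2⁻¹ := by
      simp only [δ]
      field_simp
      norm_num
    rw [← ENNReal.ofReal_natCast, ← ENNReal.ofReal_mul (by positivity), this,
      ENNReal.ofReal_inv_of_pos two_pos, ENNReal.ofReal_ofNat]
  calc uniformCube n (E ∩ {x | adjGap S x j < δ})
      ≤ ∑ k ∈ Finset.Ici k₀, uniformCube n {x | pairTime S x j = k ∧ adjGap S x j < δ} :=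
        (measure_mono hcover).trans (measure_biUnion_finset_le _ _)
    _ ≤ ∑ k ∈ Finset.Ici k₀, ENNReal.ofReal (2 * δ) * uniformCube n E := by
        refine Finset.sum_le_sum fun k hk =>
          (uniformCube_pairTime_eq_adjGap_lt_le S hj k δ).trans ?_
        exact mul_le_mul_right (measure_mono fun x (hx : (k : ℕ) ≤ pairTime S x j) =>
          (Fin.le_def.mp (Finset.mem_Ici.mp hk)).trans hx) _
    _ ≤ i * (ENNReal.ofReal (2 * δ) * uniformCube n E) := by
        rw [Finset.sum_const, Fin.card_Ici, nsmul_eq_mul]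
        gcongr
        exact_mod_cast (show n - (n - i) ≤ i by omega)
    _ = 2⁻¹ * uniformCube n E := by rw [← mul_assoc, hδ]

end OnlineStrategy

open OnlineStrategy in
/-- Conditioned on one of the adjacent cells `j, j+1` being filled only after time
`n-i`, the final contents of cells `j` and `j+1` differ by at least `1/(4i)` with
probability `Ω(1)`. -/
theorem adjacent_pair_gap_conditional_prob :
    ∃ c : ℝ, 0 < c ∧ ∀ n : ℕ, 2 ≤ n → ∀ S : OnlineStrategy n, ∀ i : ℕ, 1 ≤ i → i ≤ n →
      ∀ j : ℕ, j < n - 1 →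
      uniformCube n {x | n - i ≤ fillTime S x j ∨ n - i ≤ fillTime S x (j + 1)} ≠ 0 →
      ENNReal.ofReal c ≤
        ProbabilityTheory.cond (uniformCube n)
          {x | n - i ≤ fillTime S x j ∨ n - i ≤ fillTime S x (j + 1)}
          {x | 1 / (4 * (i : ℝ)) ≤ |strategyArr S x (j + 1) - strategyArr S x j|} := by
  refine ⟨1 / 2, by norm_num, fun n _ S i hi _ j hjn hE => ?_⟩
  have hj : j + 1 < n := by omega
  have hpair : {x | n - i ≤ fillTime S x j ∨ n - i ≤ fillTime S x (j + 1)} =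
      {x | n - i ≤ pairTime S x j} := by
    simp only [pairTime, le_max_iff]
  rw [hpair] at hE ⊢
  calc ENNReal.ofReal (1 / 2) = 1 - 2⁻¹ := by
        rw [ENNReal.one_sub_inv_two, one_div, ENNReal.ofReal_inv_of_pos two_pos,
          ENNReal.ofReal_ofNat]
    _ ≤ _ := ProbabilityTheory.one_sub_le_cond_of_measure_inter_compl_le hE
        (measurableSet_le measurable_const (measurable_adjGap S hj))
        (by simpa only [Set.compl_ofPred, not_le] using uniformCube_late_adjGap_lt_le S hj hi)
end

section
/- Let n ≥ 2 be an integer, c > 0 a real number, and Y a random variable with 0 ≤ Y ≤ 1 almost surely. Suppose that Pr[Y ≥ 1/(4i)] ≥ c·i/n for every integer 1 ≤ i ≤ n. Then E[Y] ≥ (c/8)·(log n)/n. -/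
/-!
Truncating `Y` at the thresholds `tₖ = 1/(4(k+1))` gives the pointwise layer-cake bound
`Y ≥ ∑ₖ (tₖ - tₖ₊₁)·𝟙[tₖ ≤ Y]`, so `E[Y] ≥ ∑ₖ (tₖ - tₖ₊₁)·Pr[tₖ ≤ Y]`. With
`tₖ - tₖ₊₁ = 1/(4(k+1)(k+2))` and `Pr[tₖ ≤ Y] ≥ c(k+1)/n` the `k`-th term is at least
`c/(4n(k+2))`, and the resulting harmonic sum `∑_{k<n} 1/(k+2)` is at least `(log n)/2`.
-/

open MeasureTheory Finset

theorem sum_range_inv_add_two_eq_harmonic_sub_one (n : ℕ) :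
    ∑ k ∈ range n, ((k : ℝ) + 2)⁻¹ = harmonic (n + 1) - 1 := by
  induction n with
  | zero => simp
  | succ m ih =>
    rw [sum_range_succ, ih, harmonic_succ (m + 1)]
    push_cast
    ring

theorem log_div_two_le_harmonic_succ_sub_one (n : ℕ) :
    Real.log n / 2 ≤ harmonic (n + 1) - 1 := by
  rcases Nat.eq_zero_or_pos n with rfl | hn_nat
  · simp
  have hn : (0 : ℝ) < n := by exact_mod_cast hn_nat
  have he : Real.exp 1 ^ 2 < 8 := by nlinarith [Real.exp_one_lt_d9, Real.exp_pos 1]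
  -- `(n + 2)² - 8n = (n - 2)²`
  have hsq : Real.exp 1 ^ 2 * n ≤ ((n : ℝ) + 2) ^ 2 := by
    nlinarith [sq_nonneg ((n : ℝ) - 2)]
  have hlog := Real.log_le_log (by positivity) hsq
  rw [Real.log_mul (by positivity) hn.ne', Real.log_pow, Real.log_pow, Real.log_exp] at hlog
  have hharm : Real.log ((n : ℝ) + 2) ≤ harmonic (n + 1) := by
    convert log_add_one_le_harmonic (n + 1) using 2
    push_cast
    ring
  push_cast at hlog
  linarith

theorem sum_ite_le_of_antitone {t : ℕ → ℝ} (ht : Antitone t) (ht0 : ∀ k, 0 ≤ t k)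
    {y : ℝ} (hy : 0 ≤ y) (n : ℕ) :
    ∑ k ∈ range n, (if t k ≤ y then t k - t (k + 1) else 0) ≤ y := by
  set f : ℕ → ℝ := fun k => min y (t k)
  have hterm : ∀ k, (if t k ≤ y then t k - t (k + 1) else 0) ≤ f k - f (k + 1) := by
    intro k
    split_ifs with hk
    · simp only [f, min_eq_right hk]
      linarith [min_le_right y (t (k + 1))]
    · linarith [min_le_min_left y (ht k.le_succ)]
  calc ∑ k ∈ range n, (if t k ≤ y then t k - t (k + 1) else 0)
      ≤ ∑ k ∈ range n, (f k - f (k + 1)) := sum_le_sum fun k _ => hterm k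
    _ = f 0 - f n := sum_range_sub' f n
    _ ≤ y := by linarith [min_le_left y (t 0), le_min hy (ht0 n)]

theorem sum_mul_measureReal_le_integral_of_antitone {Ω : Type*} [MeasurableSpace Ω]
    {μ : Measure Ω} [IsFiniteMeasure μ] {Y : Ω → ℝ} (hY : Measurable Y)
    (hYi : Integrable Y μ) (hY0 : 0 ≤ᵐ[μ] Y) {t : ℕ → ℝ} (ht : Antitone t)
    (ht0 : ∀ k, 0 ≤ t k) (n : ℕ) :
    ∑ k ∈ range n, (t k - t (k + 1)) * μ.real {ω | t k ≤ Y ω} ≤ ∫ ω, Y ω ∂μ := by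
  have hmeas : ∀ k, MeasurableSet {ω | t k ≤ Y ω} := fun k =>
    measurableSet_le measurable_const hY
  set g : ℕ → Ω → ℝ := fun k => {ω | t k ≤ Y ω}.indicator fun _ => t k - t (k + 1)
  have hgi : ∀ k ∈ range n, Integrable (g k) μ := fun k _ =>
    (integrable_const _).indicator (hmeas k)
  have hle : ∀ᵐ ω ∂μ, ∑ k ∈ range n, g k ω ≤ Y ω := by
    filter_upwards [hY0] with ω hω
    simpa only [g, Set.indicator_apply, Set.mem_ofPred_eq] using
      sum_ite_le_of_antitone ht ht0 hω n
  calc ∑ k ∈ range n, (t k - t (k + 1)) * μ.real {ω | t k ≤ Y ω}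
      = ∫ ω, ∑ k ∈ range n, g k ω ∂μ := by
        rw [integral_finsetSum _ hgi]
        exact sum_congr rfl fun k _ => by
          rw [integral_indicator_const _ (hmeas k), smul_eq_mul, mul_comm]
    _ ≤ ∫ ω, Y ω ∂μ := integral_mono_ae (integrable_finsetSum _ hgi) hYi hle

theorem layer_cake_log_lower_bound_general {Ω : Type*} [MeasurableSpace Ω]
    (P : Measure Ω) [IsProbabilityMeasure P] (n : ℕ)
    (c : ℝ) (hc : 0 < c) (Y : Ω → ℝ) (hY : Measurable Y)
    (h01 : ∀ᵐ ω ∂P, Y ω ∈ Set.Icc (0 : ℝ) 1)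
    (hprob : ∀ i : ℕ, 1 ≤ i → i ≤ n →
      ENNReal.ofReal (c * (i : ℝ) / (n : ℝ)) ≤ P {ω | 1 / (4 * (i : ℝ)) ≤ Y ω}) :
    (c / 8) * Real.log n / n ≤ ∫ ω, Y ω ∂P := by
  set t : ℕ → ℝ := fun k => 1 / (4 * ((k : ℝ) + 1))
  have ht : Antitone t := fun j k hjk => by
    dsimp only [t]
    gcongr
  have hterm : ∀ k ∈ range n,
      c / (4 * n) * ((k : ℝ) + 2)⁻¹ ≤ (t k - t (k + 1)) * P.real {ω | t k ≤ Y ω} := by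
    intro k hk
    have hp := (ENNReal.ofReal_le_iff_le_toReal (measure_ne_top _ _)).1
      (hprob (k + 1) k.succ_pos (mem_range.1 hk))
    push_cast at hp
    calc c / (4 * n) * ((k : ℝ) + 2)⁻¹ = (t k - t (k + 1)) * (c * ((k : ℝ) + 1) / n) := by
          dsimp only [t]
          push_cast
          field_simp
          ring
      _ ≤ (t k - t (k + 1)) * P.real {ω | t k ≤ Y ω} :=
          mul_le_mul_of_nonneg_left hp (sub_nonneg.2 (ht k.le_succ))
  calc (c / 8) * Real.log n / n = c / (4 * n) * (Real.log n / 2) := by ring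
    _ ≤ c / (4 * n) * ∑ k ∈ range n, ((k : ℝ) + 2)⁻¹ := by
        rw [sum_range_inv_add_two_eq_harmonic_sub_one]
        gcongr
        exact log_div_two_le_harmonic_succ_sub_one n
    _ ≤ ∑ k ∈ range n, (t k - t (k + 1)) * P.real {ω | t k ≤ Y ω} := by
        rw [mul_sum]
        exact sum_le_sum hterm
    _ ≤ ∫ ω, Y ω ∂P := sum_mul_measureReal_le_integral_of_antitone hY
        (.of_mem_Icc 0 1 hY.aemeasurable h01)
        (h01.mono fun ω hω => hω.1) ht (fun k => by positivity) n

/-- Layer-cake summation: if a `[0,1]`-valued random variable `Y` satisfies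
`Pr[Y ≥ 1/(4i)] ≥ c·i/n` for all `1 ≤ i ≤ n`, then `E[Y] ≥ (c/8)·(log n)/n`. -/
theorem layer_cake_log_lower_bound {Ω : Type*} [MeasurableSpace Ω]
    (P : Measure Ω) [IsProbabilityMeasure P] (n : ℕ) (hn : 2 ≤ n)
    (c : ℝ) (hc : 0 < c) (Y : Ω → ℝ) (hY : Measurable Y)
    (h01 : ∀ᵐ ω ∂P, Y ω ∈ Set.Icc (0 : ℝ) 1)
    (hprob : ∀ i : ℕ, 1 ≤ i → i ≤ n →
      ENNReal.ofReal (c * (i : ℝ) / (n : ℝ)) ≤ P {ω | 1 / (4 * (i : ℝ)) ≤ Y ω}) :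
    (c / 8) * Real.log n / n ≤ ∫ ω, Y ω ∂P :=
  layer_cake_log_lower_bound_general P n c hc Y hY h01 hprob
end
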